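/- arXiv:1010.3358 — 6 statements merged into one kernel-verified Lean document; each statement's English description precedes it below -/
import Mathlib

section
/- For each i, j ∈ {1,…,N}, the function I_{ij}(q,p) = pᵢpⱼ − (2λ H_λ(q,p) − ω²) qᵢqⱼ is a constant of motion for H_λ, i.e. the canonical Poisson bracket {I_{ij}, H_λ} vanishes wherever 1 + λq² ≠ 0. -/
open Filter Topology

noncomputable def Hlam {N : ℕ} (lam om : ℝ) (q p : Fin N → ℝ) : ℝ :=
  ((∑ i, p i ^ 2) + om ^ 2 * ∑ i, q i ^ 2) / (2 * (1 + lam * ∑ i, q i ^ 2))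


noncomputable def pbracket {N : ℕ} (F G : (Fin N → ℝ) → (Fin N → ℝ) → ℝ)
    (q p : Fin N → ℝ) : ℝ :=
  ∑ k, (deriv (fun t => F (Function.update q k t) p) (q k)
          * deriv (fun t => G q (Function.update p k t)) (p k)
        - deriv (fun t => F q (Function.update p k t)) (p k)
          * deriv (fun t => G (Function.update q k t) p) (q k))

/-
Write A = 1 + λ|q|² and K = 2λH − ω² = (λ|p|² − ω²)/A. The partial derivatives of H are
∂H/∂pₖ = pₖ/A and ∂H/∂qₖ = −K qₖ/A. In {I_ij, H} the two terms in which the factor H of I_ij is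
differentiated are ±2λK pₖqₖqᵢqⱼ/A² and cancel for every k; what is left is
(K/A)((pⱼqᵢ − qⱼpᵢ) + (pᵢqⱼ − qᵢpⱼ)) = 0.
-/

open Function

section Update

variable {ι : Type*} [DecidableEq ι]

theorem hasDerivAt_update_apply (v : ι → ℝ) (k m : ι) :
    HasDerivAt (fun t => update v k t m) (if m = k then 1 else 0) (v k) := by
  simpa [Pi.single_apply] using hasDerivAt_pi.1 (hasDerivAt_update v k (v k)) m

theorem hasDerivAt_sum_sq_update [Fintype ι] (v : ι → ℝ) (k : ι) :
    HasDerivAt (fun t => ∑ m, update v k t m ^ 2) (2 * v k) (v k) := by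
  refine (HasDerivAt.fun_sum fun m _ => (hasDerivAt_update_apply v k m).fun_pow 2).congr_deriv ?_
  simp

end Update

theorem pbracket_eq_sum_of_hasDerivAt {N : ℕ} {F G : (Fin N → ℝ) → (Fin N → ℝ) → ℝ}
    {q p Fq Fp Gq Gp : Fin N → ℝ}
    (hFq : ∀ k, HasDerivAt (fun t => F (update q k t) p) (Fq k) (q k))
    (hFp : ∀ k, HasDerivAt (fun t => F q (update p k t)) (Fp k) (p k))
    (hGq : ∀ k, HasDerivAt (fun t => G (update q k t) p) (Gq k) (q k))
    (hGp : ∀ k, HasDerivAt (fun t => G q (update p k t)) (Gp k) (p k)) :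
    pbracket F G q p = ∑ k, (Fq k * Gp k - Fp k * Gq k) := by
  simp only [pbracket, (hFq _).deriv, (hFp _).deriv, (hGq _).deriv, (hGp _).deriv]

section Hamiltonian

variable {N : ℕ} (lam om : ℝ) (q p : Fin N → ℝ)

theorem hasDerivAt_Hlam_update_p (k : Fin N) :
    HasDerivAt (fun t => Hlam lam om q (update p k t)) (p k / (1 + lam * ∑ m, q m ^ 2)) (p k) := by
  refine (((hasDerivAt_sum_sq_update p k).add_const _).div_const _).congr_deriv ?_
  rw [mul_div_mul_left _ _ two_ne_zero]

theorem two_mul_lam_mul_Hlam_sub (h : 1 + lam * ∑ m, q m ^ 2 ≠ 0) :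
    2 * lam * Hlam lam om q p - om ^ 2
      = (lam * ∑ m, p m ^ 2 - om ^ 2) / (1 + lam * ∑ m, q m ^ 2) := by
  unfold Hlam
  field_simp
  ring

theorem hasDerivAt_Hlam_update_q (h : 1 + lam * ∑ m, q m ^ 2 ≠ 0) (k : Fin N) :
    HasDerivAt (fun t => Hlam lam om (update q k t) p)
      (-(2 * lam * Hlam lam om q p - om ^ 2) * q k / (1 + lam * ∑ m, q m ^ 2)) (q k) := by
  have hs := hasDerivAt_sum_sq_update q k
  refine (((hs.const_mul (om ^ 2)).const_add _).fun_div
    ((hs.const_mul lam).const_add 1 |>.const_mul 2) (by simpa using h)).congr_deriv ?_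
  rw [two_mul_lam_mul_Hlam_sub lam om q p h]
  simp only [update_eq_self]
  field_simp
  ring

end Hamiltonian

noncomputable def Ilam {N : ℕ} (lam om : ℝ) (i j : Fin N) (q p : Fin N → ℝ) : ℝ :=
  p i * p j - (2 * lam * Hlam lam om q p - om ^ 2) * (q i * q j)

section ConstantOfMotion

variable {N : ℕ} (lam om : ℝ) (i j : Fin N) (q p : Fin N → ℝ) (k : Fin N)

theorem hasDerivAt_Ilam_update_q {Hq : ℝ}
    (hH : HasDerivAt (fun t => Hlam lam om (update q k t) p) Hq (q k)) :
    HasDerivAt (fun t => Ilam lam om i j (update q k t) p)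
      (-(2 * lam * Hq * (q i * q j) + (2 * lam * Hlam lam om q p - om ^ 2)
        * ((if i = k then 1 else 0) * q j + q i * (if j = k then 1 else 0)))) (q k) := by
  refine ((hasDerivAt_const _ _).sub (((hH.const_mul _).sub_const _).mul
    ((hasDerivAt_update_apply q k i).mul (hasDerivAt_update_apply q k j)))).congr_deriv ?_
  simp

theorem hasDerivAt_Ilam_update_p {Hp : ℝ}
    (hH : HasDerivAt (fun t => Hlam lam om q (update p k t)) Hp (p k)) :
    HasDerivAt (fun t => Ilam lam om i j q (update p k t))
      ((if i = k then 1 else 0) * p j + p i * (if j = k then 1 else 0)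
        - 2 * lam * Hp * (q i * q j)) (p k) := by
  refine (((hasDerivAt_update_apply p k i).mul (hasDerivAt_update_apply p k j)).sub
    (((hH.const_mul _).sub_const _).mul_const _)).congr_deriv ?_
  simp

end ConstantOfMotion

theorem stmt_1 {N : ℕ} (lam om : ℝ) (i j : Fin N) (q p : Fin N → ℝ)
    (h : 1 + lam * ∑ k, q k ^ 2 ≠ 0) :
    pbracket
      (fun q p => p i * p j - (2 * lam * Hlam lam om q p - om ^ 2) * (q i * q j))
      (Hlam lam om) q p = 0 := by
  have hHq := hasDerivAt_Hlam_update_q lam om q p h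
  have hHp := hasDerivAt_Hlam_update_p lam om q p
  change pbracket (Ilam lam om i j) (Hlam lam om) q p = 0
  rw [pbracket_eq_sum_of_hasDerivAt (fun k => hasDerivAt_Ilam_update_q lam om i j q p k (hHq k))
    (fun k => hasDerivAt_Ilam_update_p lam om i j q p k (hHp k)) hHq hHp]
  set A := 1 + lam * ∑ k, q k ^ 2
  set K := 2 * lam * Hlam lam om q p - om ^ 2
  calc _ = ∑ k, K / A * ((if i = k then 1 else 0) * (p j * q k - q j * p k)
          + (if j = k then 1 else 0) * (p i * q k - q i * p k)) :=
        Finset.sum_congr rfl fun k _ => by ring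
    _ = 0 := by
        simp only [← Finset.mul_sum, Finset.sum_add_distrib, ite_mul, one_mul, zero_mul,
          Finset.sum_ite_eq, Finset.mem_univ, if_true]
        ring
end

section
/- The angular momentum integrals are in involution: for 2 ≤ m < m' ≤ N, {C^{(m)}, C^{(m')}} = 0, where C^{(m)}(q,p) = ∑_{1 ≤ i < j ≤ m} (qᵢpⱼ − qⱼpᵢ)². -/
open Filter Topology

/-! With `L_ij = q_i p_j - q_j p_i`, the partial derivatives of `C⁽ᵐ⁾` in direction `k < m` are
`∂C/∂q_k = 2 ∑_{j<m} L_kj p_j` and `∂C/∂p_k = -2 ∑_{j<m} L_kj q_j` (both vanish for `k ≥ m`).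
For `m ≤ m'` the bracket is therefore `4 ∑_{k,j<m} ∑_{l<m'} L_kj L_kl L_jl`, which vanishes
because the summand is antisymmetric in `(k, j)`. -/

namespace AngularMomentum

variable {N : ℕ}

def angMom (q p : Fin N → ℝ) (i j : Fin N) : ℝ := q i * p j - q j * p i

theorem angMom_swap (q p : Fin N → ℝ) (i j : Fin N) : angMom p q i j = -angMom q p i j := by
  simp only [angMom]; ring

def casimir (m : ℕ) (q p : Fin N → ℝ) : ℝ :=
  ∑ i : Fin N, ∑ j : Fin N,
    if (i : ℕ) < (j : ℕ) ∧ (j : ℕ) < m then angMom q p i j ^ 2 else 0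

theorem casimir_comm (m : ℕ) (q p : Fin N → ℝ) : casimir m q p = casimir m p q := by
  unfold casimir
  simp only [angMom_swap p q, neg_sq]

theorem sum_sum_eq_zero_of_antisymm {ι : Type*} [Fintype ι] (f : ι → ι → ℝ)
    (hf : ∀ i j, f j i = -f i j) : ∑ i, ∑ j, f i j = 0 := by
  have h : ∑ i, ∑ j, f i j = -∑ i, ∑ j, f i j := by
    nth_rewrite 1 [Finset.sum_comm]
    rw [← Finset.sum_neg_distrib]
    refine Finset.sum_congr rfl fun i _ => ?_
    rw [← Finset.sum_neg_distrib]
    exact Finset.sum_congr rfl fun j _ => hf _ _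
  linarith

theorem sum_sum_lt_lt_delta_eq (m : ℕ) (k : Fin N) (f : Fin N → ℝ) (hf : f k = 0) :
    ∑ i : Fin N, ∑ j : Fin N,
      (if (i : ℕ) < (j : ℕ) ∧ (j : ℕ) < m then
        (if i = k then f j else 0) + (if j = k then f i else 0) else 0)
      = ∑ j : Fin N, if (k : ℕ) < m ∧ (j : ℕ) < m then f j else 0 := by
  have hsplit : ∀ i j : Fin N,
      (if (i : ℕ) < (j : ℕ) ∧ (j : ℕ) < m then
        (if i = k then f j else 0) + (if j = k then f i else 0) else 0)
      = (if i = k then (if (k : ℕ) < (j : ℕ) ∧ (j : ℕ) < m then f j else 0) else 0)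
        + (if j = k then (if (i : ℕ) < (k : ℕ) ∧ (k : ℕ) < m then f i else 0) else 0) := by
    intro i j
    split_ifs <;> grind
  simp only [hsplit, Finset.sum_add_distrib, Finset.sum_ite_irrel, Finset.sum_const_zero,
    Finset.sum_ite_eq', Finset.mem_univ, if_true]
  rw [← Finset.sum_add_distrib]
  refine Finset.sum_congr rfl fun j _ => ?_
  rcases eq_or_ne j k with rfl | hj
  · simp [hf]
  · have hjk : (j : ℕ) ≠ k := Fin.val_ne_of_ne hj
    split_ifs <;> first | omega | simp

theorem hasDerivAt_angMom_update_left (q p : Fin N → ℝ) (k i j : Fin N) :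
    HasDerivAt (fun t => angMom (Function.update q k t) p i j)
      ((if i = k then p j else 0) - (if j = k then p i else 0)) (q k) := by
  have hq : ∀ l, HasDerivAt (fun t => Function.update q k t l) (if l = k then 1 else 0) (q k) :=
    fun l => by simpa [Pi.single_apply] using hasDerivAt_pi.1 (hasDerivAt_update q k (q k)) l
  refine (((hq i).mul_const (p j)).sub ((hq j).mul_const (p i))).congr_deriv ?_
  split_ifs <;> ring

theorem hasDerivAt_casimir_update_left (m : ℕ) (q p : Fin N → ℝ) (k : Fin N) :
    HasDerivAt (fun t => casimir m (Function.update q k t) p)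
      (∑ j : Fin N, if (k : ℕ) < m ∧ (j : ℕ) < m then 2 * angMom q p k j * p j else 0) (q k) := by
  set f : Fin N → ℝ := fun j => 2 * angMom q p k j * p j
  have hterm : ∀ i j : Fin N, HasDerivAt
      (fun t => if (i : ℕ) < (j : ℕ) ∧ (j : ℕ) < m then
        angMom (Function.update q k t) p i j ^ 2 else 0)
      (if (i : ℕ) < (j : ℕ) ∧ (j : ℕ) < m then
        (if i = k then f j else 0) + (if j = k then f i else 0) else 0) (q k) := by
    intro i j
    by_cases hij : (i : ℕ) < (j : ℕ) ∧ (j : ℕ) < m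
    · simp only [if_pos hij]
      refine ((hasDerivAt_angMom_update_left q p k i j).pow 2).congr_deriv ?_
      simp only [Function.update_eq_self, f, angMom]
      split_ifs <;> subst_vars <;> first | omega | ring
    · simp only [if_neg hij]
      exact hasDerivAt_const _ _
  have hf : f k = 0 := by simp [f, angMom]
  rw [← sum_sum_lt_lt_delta_eq m k f hf]
  exact HasDerivAt.fun_sum fun i _ => HasDerivAt.fun_sum fun j _ => hterm i j

theorem hasDerivAt_casimir_update_right (m : ℕ) (q p : Fin N → ℝ) (k : Fin N) :
    HasDerivAt (fun t => casimir m q (Function.update p k t))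
      (∑ j : Fin N, if (k : ℕ) < m ∧ (j : ℕ) < m then -(2 * angMom q p k j * q j) else 0)
      (p k) := by
  have h := hasDerivAt_casimir_update_left m p q k
  simp only [angMom_swap q p, mul_neg, neg_mul] at h
  simpa only [casimir_comm m q] using h

theorem pbracket_casimir_eq (m m' : ℕ) (hm : m ≤ m') (q p : Fin N → ℝ) :
    pbracket (casimir m) (casimir m') q p = ∑ k : Fin N, ∑ j : Fin N, ∑ l : Fin N,
      if (k : ℕ) < m ∧ (j : ℕ) < m ∧ (l : ℕ) < m' then
        4 * angMom q p k j * angMom q p k l * angMom q p j l else 0 := by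
  simp only [pbracket, (hasDerivAt_casimir_update_left _ _ _ _).deriv,
    (hasDerivAt_casimir_update_right _ _ _ _).deriv]
  refine Finset.sum_congr rfl fun k _ => ?_
  rw [Finset.sum_mul_sum, Finset.sum_mul_sum, ← Finset.sum_sub_distrib]
  refine Finset.sum_congr rfl fun j _ => ?_
  rw [← Finset.sum_sub_distrib]
  refine Finset.sum_congr rfl fun l _ => ?_
  simp only [angMom]
  split_ifs <;> first | omega | ring

theorem pbracket_casimir_eq_zero (m m' : ℕ) (hm : m ≤ m') (q p : Fin N → ℝ) :
    pbracket (casimir m) (casimir m') q p = 0 := by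
  rw [pbracket_casimir_eq m m' hm]
  refine sum_sum_eq_zero_of_antisymm _ fun k j => ?_
  rw [← Finset.sum_neg_distrib]
  refine Finset.sum_congr rfl fun l _ => ?_
  simp only [angMom]
  split_ifs <;> first | omega | ring

end AngularMomentum

theorem stmt_5_general {N : ℕ} (m m' : ℕ) (hmm : m < m')
    (q p : Fin N → ℝ) :
    pbracket
      (fun q p => ∑ i : Fin N, ∑ j : Fin N,
        if (i : ℕ) < (j : ℕ) ∧ (j : ℕ) < m then (q i * p j - q j * p i) ^ 2 else 0)
      (fun q p => ∑ i : Fin N, ∑ j : Fin N,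
        if (i : ℕ) < (j : ℕ) ∧ (j : ℕ) < m' then (q i * p j - q j * p i) ^ 2 else 0)
      q p = 0 :=
  AngularMomentum.pbracket_casimir_eq_zero m m' hmm.le q p

theorem stmt_5 {N : ℕ} (m m' : ℕ) (hm2 : 2 ≤ m) (hmm : m < m') (hm'N : m' ≤ N)
    (q p : Fin N → ℝ) :
    pbracket
      (fun q p => ∑ i : Fin N, ∑ j : Fin N,
        if (i : ℕ) < (j : ℕ) ∧ (j : ℕ) < m then (q i * p j - q j * p i) ^ 2 else 0)
      (fun q p => ∑ i : Fin N, ∑ j : Fin N,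
        if (i : ℕ) < (j : ℕ) ∧ (j : ℕ) < m' then (q i * p j - q j * p i) ^ 2 else 0)
      q p = 0 :=
  stmt_5_general m m' hmm q p
end

section
/- For λ < 0 and N ≥ 7, the function r ↦ R(r) = |λ|(N−1)(2N − 3(N−2)|λ|r²)/(1−|λ|r²)³ on (0, r_c) attains a maximum at r_max = √((N+2)/(2(N−2)|λ|)) with value R(r_max) = 4|λ|(N−1)(N−2)³/(N−6)², and R(r) → −∞ as r → r_c⁻. -/
set_option maxHeartbeats 1000000


open Filter Topology

private lemma aux_key (n u : ℝ) (hn : 7 ≤ n) (hu1 : u < 1) :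
    (2 * n - 3 * (n - 2) * u) * (n - 6) ^ 2 ≤ 4 * (n - 2) ^ 3 * (1 - u) ^ 3 := by
  have h2 : 0 < 2 * (n - 4) - (n - 2) * u := by nlinarith
  nlinarith [mul_nonneg (sq_nonneg (2 * (n - 2) * u - (n + 2))) h2.le]

theorem stmt_11 (N : ℕ) (hN : 7 ≤ N) (lam : ℝ) (hlam : lam < 0)
    (R : ℝ → ℝ)
    (hR : ∀ r, R r = |lam| * ((N : ℝ) - 1) * (2 * N - 3 * ((N : ℝ) - 2) * |lam| * r ^ 2)
        / (1 - |lam| * r ^ 2) ^ 3)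
    (rc rmax : ℝ) (hrc : rc = 1 / Real.sqrt |lam|)
    (hrmax : rmax = Real.sqrt (((N : ℝ) + 2) / (2 * ((N : ℝ) - 2) * |lam|))) :
    rmax ∈ Set.Ioo (0 : ℝ) rc ∧
    (∀ r ∈ Set.Ioo (0 : ℝ) rc, R r ≤ R rmax) ∧
    R rmax = 4 * |lam| * ((N : ℝ) - 1) * ((N : ℝ) - 2) ^ 3 / ((N : ℝ) - 6) ^ 2 ∧
    Tendsto R (𝓝[<] rc) atBot := by
  have ha : 0 < |lam| := abs_pos.mpr hlam.ne
  set n : ℝ := (N : ℝ) with hn_def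
  have hn : (7 : ℝ) ≤ n := by rw [hn_def]; exact_mod_cast hN
  have hn1 : (0 : ℝ) < n - 1 := by linarith
  have hn2 : (0 : ℝ) < n - 2 := by linarith
  have hn6 : (0 : ℝ) < n - 6 := by linarith
  have hsa : (0 : ℝ) < Real.sqrt |lam| := Real.sqrt_pos.mpr ha
  have hrc0 : 0 < rc := by rw [hrc]; positivity
  have hrc2 : |lam| * rc ^ 2 = 1 := by
    rw [hrc, div_pow, one_pow, Real.sq_sqrt ha.le]
    field_simp
  have hrm2 : rmax ^ 2 = (n + 2) / (2 * (n - 2) * |lam|) := by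
    rw [hrmax, Real.sq_sqrt (by positivity)]
  have hrmax0 : 0 < rmax := by
    rw [hrmax]; exact Real.sqrt_pos.mpr (by positivity)
  have hrmaxlt : rmax < rc := by
    have hsq : rmax ^ 2 < rc ^ 2 := by
      have hrc2' : rc ^ 2 = 1 / |lam| := by
        field_simp at hrc2 ⊢; linarith [hrc2]
      rw [hrm2, hrc2', div_lt_div_iff₀ (by positivity) ha]
      nlinarith
    exact lt_of_pow_lt_pow_left₀ 2 hrc0.le hsq
  have hRmaxval : R rmax = 4 * |lam| * (n - 1) * (n - 2) ^ 3 / (n - 6) ^ 2 := by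
    rw [hR, hrm2]
    rw [div_eq_div_iff (by
        have h1 : (1 : ℝ) - |lam| * ((n + 2) / (2 * (n - 2) * |lam|)) = (n - 6) / (2 * (n - 2)) := by
          field_simp; ring
        rw [h1]; positivity) (by positivity)]
    field_simp
    ring
  refine ⟨⟨hrmax0, hrmaxlt⟩, ?_, hRmaxval, ?_⟩
  · intro r hr
    have hu1 : |lam| * r ^ 2 < 1 := by
      have h : r ^ 2 < rc ^ 2 := by nlinarith [hr.1, hr.2]
      nlinarith
    have hden : (0 : ℝ) < (1 - |lam| * r ^ 2) ^ 3 := pow_pos (by linarith) 3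
    rw [hR r, hRmaxval, div_le_div_iff₀ hden (by positivity)]
    have key := aux_key n (|lam| * r ^ 2) hn hu1
    have hfac : (0 : ℝ) ≤ |lam| * (n - 1) := by positivity
    nlinarith [mul_le_mul_of_nonneg_left key hfac]
  · -- tendsto atBot
    have hden : Tendsto (fun r => (1 - |lam| * r ^ 2) ^ 3) (𝓝[<] rc) (𝓝[>] (0 : ℝ)) := by
      rw [tendsto_nhdsWithin_iff]
      constructor
      · have hc : Continuous fun r : ℝ => (1 - |lam| * r ^ 2) ^ 3 :=
          (continuous_const.sub (continuous_const.mul (continuous_pow 2))).pow 3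
        have h0 : ((1 : ℝ) - |lam| * rc ^ 2) ^ 3 = 0 := by rw [hrc2]; ring
        have := (hc.tendsto rc).mono_left (nhdsWithin_le_nhds (s := Set.Iio rc))
        rwa [h0] at this
      · filter_upwards [Ioo_mem_nhdsLT_of_mem (Set.mem_Ioc.mpr ⟨hrc0, le_refl rc⟩)] with r hr
        have hu1 : |lam| * r ^ 2 < 1 := by
          have h : r ^ 2 < rc ^ 2 := by nlinarith [hr.1, hr.2]
          nlinarith
        have : (0 : ℝ) < 1 - |lam| * r ^ 2 := by linarith
        exact Set.mem_Ioi.mpr (by positivity)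
    have hinv : Tendsto (fun r => ((1 - |lam| * r ^ 2) ^ 3)⁻¹) (𝓝[<] rc) atTop :=
      tendsto_inv_nhdsGT_zero.comp hden
    have hnum : Tendsto (fun r => |lam| * (n - 1) * (2 * n - 3 * (n - 2) * |lam| * r ^ 2))
        (𝓝[<] rc) (𝓝 (|lam| * (n - 1) * (2 * n - 3 * (n - 2) * |lam| * rc ^ 2))) := by
      have hc : Continuous fun r : ℝ => |lam| * (n - 1) * (2 * n - 3 * (n - 2) * |lam| * r ^ 2) :=
        continuous_const.mul (continuous_const.sub (continuous_const.mul (continuous_pow 2)))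
      exact (hc.tendsto rc).mono_left nhdsWithin_le_nhds
    have hL : |lam| * (n - 1) * (2 * n - 3 * (n - 2) * |lam| * rc ^ 2) < 0 := by
      have hval : |lam| * (n - 1) * (2 * n - 3 * (n - 2) * |lam| * rc ^ 2)
          = |lam| * (n - 1) * (6 - n) := by
        linear_combination (-3 * |lam| * (n - 1) * (n - 2)) * hrc2
      rw [hval]
      have : (0 : ℝ) < |lam| * (n - 1) := by positivity
      nlinarith
    have := Filter.Tendsto.neg_mul_atTop hL hnum hinv
    exact this.congr fun r => by rw [hR r, div_eq_mul_inv]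
end

section
/- For λ > 0, ω > 0 and c_N > 0, the effective potential U_eff(r) = c_N/(2(1+λr²)r²) + ω²r²/(2(1+λr²)) on (0,∞) attains its unique minimum at r_min with r_min² = (λc_N + √(λ²c_N² + ω²c_N))/ω², and the minimum value is U_eff(r_min) = −λc_N + √(λ²c_N² + ω²c_N). -/
/-!
With `m = √(λ²c² + ω²c) - λc` one has `m² + 2λcm = ω²c`, and this relation turns
`c · (U_eff(r) - m) · 2(1 + λr²)r²` into the perfect square `(m r² - c)²`.
Hence `U_eff ≥ m` on `(0, ∞)`, with equality exactly when `r² = c / m = r_min²`.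
-/

open Filter Topology

noncomputable def effPotential (lam om c r : ℝ) : ℝ :=
  c / (2 * (1 + lam * r ^ 2) * r ^ 2) + om ^ 2 * r ^ 2 / (2 * (1 + lam * r ^ 2))

section effPotential

variable {lam om c m r : ℝ}

theorem effPotential_sub_eq (hm : m ^ 2 + 2 * lam * c * m = om ^ 2 * c) (hc : c ≠ 0)
    (hr : r ≠ 0) (hD : 1 + lam * r ^ 2 ≠ 0) :
    effPotential lam om c r - m = (m * r ^ 2 - c) ^ 2 / (2 * c * (1 + lam * r ^ 2) * r ^ 2) := by
  unfold effPotential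
  field_simp
  linear_combination -r ^ 4 * hm

theorem le_effPotential (hlam : 0 ≤ lam) (hc : 0 < c) (hm : m ^ 2 + 2 * lam * c * m = om ^ 2 * c)
    (hr : r ≠ 0) : m ≤ effPotential lam om c r := by
  have hD : 0 < 1 + lam * r ^ 2 := by positivity
  have h := effPotential_sub_eq hm hc.ne' hr hD.ne'
  have : 0 ≤ (m * r ^ 2 - c) ^ 2 / (2 * c * (1 + lam * r ^ 2) * r ^ 2) := by positivity
  linarith

theorem effPotential_eq_iff (hlam : 0 ≤ lam) (hc : 0 < c)
    (hm : m ^ 2 + 2 * lam * c * m = om ^ 2 * c) (hr : r ≠ 0) :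
    effPotential lam om c r = m ↔ m * r ^ 2 = c := by
  have hD : 0 < 1 + lam * r ^ 2 := by positivity
  rw [← sub_eq_zero, effPotential_sub_eq hm hc.ne' hr hD.ne', div_eq_zero_iff,
    or_iff_left (by positivity), sq_eq_zero_iff, sub_eq_zero]

end effPotential

theorem stmt_16 (lam om c : ℝ) (hlam : 0 < lam) (hom : 0 < om) (hc : 0 < c)
    (Ueff : ℝ → ℝ)
    (hUeff : ∀ r, Ueff r = c / (2 * (1 + lam * r ^ 2) * r ^ 2)
        + om ^ 2 * r ^ 2 / (2 * (1 + lam * r ^ 2)))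
    (rmin : ℝ)
    (hrmin : rmin = Real.sqrt ((lam * c + Real.sqrt (lam ^ 2 * c ^ 2 + om ^ 2 * c)) / om ^ 2)) :
    0 < rmin ∧
    Ueff rmin = -lam * c + Real.sqrt (lam ^ 2 * c ^ 2 + om ^ 2 * c) ∧
    (∀ r : ℝ, 0 < r → Ueff rmin ≤ Ueff r) ∧
    (∀ r : ℝ, 0 < r → Ueff r = Ueff rmin → r = rmin) := by
  have hU : Ueff = effPotential lam om c := funext hUeff
  subst hU
  set S := Real.sqrt (lam ^ 2 * c ^ 2 + om ^ 2 * c)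
  have hS2 : S ^ 2 = lam ^ 2 * c ^ 2 + om ^ 2 * c := Real.sq_sqrt (by positivity)
  have hSgt : lam * c < S := (Real.lt_sqrt (by positivity)).2 (by nlinarith [pow_pos hom 2])
  have hm : (-lam * c + S) ^ 2 + 2 * lam * c * (-lam * c + S) = om ^ 2 * c := by
    linear_combination hS2
  have hrmin_pos : 0 < rmin := hrmin ▸ Real.sqrt_pos.2 (by positivity)
  have hrmin_sq : rmin ^ 2 = (lam * c + S) / om ^ 2 := hrmin ▸ Real.sq_sqrt (by positivity)
  have hmin : (-lam * c + S) * rmin ^ 2 = c := by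
    rw [hrmin_sq]
    field_simp
    linear_combination hS2
  have hval := (effPotential_eq_iff hlam.le hc hm hrmin_pos.ne').2 hmin
  refine ⟨hrmin_pos, hval, fun r hr => hval ▸ le_effPotential hlam.le hc hm hr.ne', ?_⟩
  intro r hr hEq
  have hr_sq := (effPotential_eq_iff hlam.le hc hm hr.ne').1 (hEq.trans hval)
  have hmpos : -lam * c + S ≠ 0 := by linarith
  exact (sq_eq_sq₀ hr.le hrmin_pos.le).1 (mul_left_cancel₀ hmpos (hr_sq.trans hmin.symm))
end

section
/- For λ < 0, ω > 0 and c_N > 0, the effective potential U_eff(r) = c_N/(2(1−|λ|r²)r²) + ω²r²/(2(1−|λ|r²)) on (0, r_c) with r_c = 1/√|λ| attains its unique minimum at r_min with r_min² = (−|λ|c_N + √(λ²c_N² + ω²c_N))/ω², with minimum value U_eff(r_min) = |λ|c_N + √(λ²c_N² + ω²c_N); moreover U_eff(r) → +∞ both as r → 0⁺ and as r → r_c⁻. -/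
/-!
In the variable `t = r²` the potential is `(c + ω²t²) / (2(1 - |λ|t)t)`. Let `t₀ = r_min²` and
`M = |λ|c + √(λ²c² + ω²c)`; then `M t₀ = c` and `M = ω²t₀ + 2|λ|c`, which give the identity
`c + ω²t² = 2M(1 - |λ|t)t + (ω² + 2|λ|M)(t - t₀)²`. Hence on `(0, r_c)` the difference
`U_eff - M` is a positive multiple of `(r² - t₀)²`, so `M` is the minimum, attained exactly at
`r² = t₀`. At both ends of the interval the numerator `c + ω²r⁴` stays positive while the
denominator `2(1 - |λ|r²)r²` tends to `0⁺`.
-/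

open Filter Topology

noncomputable def effPot (A om c r : ℝ) : ℝ :=
  c / (2 * (1 - A * r ^ 2) * r ^ 2) + om ^ 2 * r ^ 2 / (2 * (1 - A * r ^ 2))

noncomputable def criticalSq (A om c : ℝ) : ℝ := (-A * c + √(A ^ 2 * c ^ 2 + om ^ 2 * c)) / om ^ 2

noncomputable def minValue (A om c : ℝ) : ℝ := A * c + √(A ^ 2 * c ^ 2 + om ^ 2 * c)

theorem tendsto_div_atTop_of_tendsto_nhdsGT_zero {α : Type*} {l : Filter α} {f g : α → ℝ}
    {C : ℝ} (hC : 0 < C) (hf : Tendsto f l (𝓝 C)) (hg : Tendsto g l (𝓝[>] 0)) :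
    Tendsto (fun x => f x / g x) l atTop := by
  simpa only [div_eq_mul_inv, Pi.inv_apply] using hf.pos_mul_atTop hC hg.inv_tendsto_nhdsGT_zero

-- Also valid where a denominator vanishes: both sides are then `0`.
theorem effPot_eq_div (A om c r : ℝ) :
    effPot A om c r = (c + om ^ 2 * r ^ 4) / (2 * (1 - A * r ^ 2) * r ^ 2) := by
  unfold effPot
  rcases eq_or_ne r 0 with rfl | hr
  · simp
  rcases eq_or_ne (1 - A * r ^ 2) 0 with h | h
  · simp [h]
  field_simp

section

variable {A om c : ℝ}

theorem effPot_eq_add_sq {M t₀ r : ℝ} (hM : M = om ^ 2 * t₀ + 2 * A * c) (hMt : M * t₀ = c)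
    (hr : r ≠ 0) (hr' : 1 - A * r ^ 2 ≠ 0) :
    effPot A om c r =
      M + (om ^ 2 + 2 * A * M) * (r ^ 2 - t₀) ^ 2 / (2 * (1 - A * r ^ 2) * r ^ 2) := by
  have hD : 2 * (1 - A * r ^ 2) * r ^ 2 ≠ 0 := by positivity
  rw [effPot_eq_div, add_div' _ _ _ hD]
  congr 1
  linear_combination (t₀ - 2 * r ^ 2) * hM + (4 * A * r ^ 2 - 1 - 2 * A * t₀) * hMt

theorem one_sub_mul_sq_pos {r : ℝ} (hA : 0 < A) (hr : r ∈ Set.Ioo 0 (1 / √A)) :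
    0 < 1 - A * r ^ 2 := by
  have h : r ^ 2 < (1 / √A) ^ 2 := pow_lt_pow_left₀ hr.2 hr.1.le two_ne_zero
  rw [div_pow, one_pow, Real.sq_sqrt hA.le, lt_div_iff₀ hA] at h
  linarith

theorem mul_sq_one_div_sqrt (hA : 0 < A) : A * (1 / √A) ^ 2 = 1 := by
  rw [div_pow, one_pow, Real.sq_sqrt hA.le, mul_one_div_cancel hA.ne']

theorem tendsto_effPot_atTop {r₀ : ℝ} {l : Filter ℝ} (hA : 0 < A) (hc : 0 < c)
    (hl : l ≤ 𝓝 r₀) (hr₀ : (1 - A * r₀ ^ 2) * r₀ ^ 2 = 0)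
    (hmem : ∀ᶠ r in l, r ∈ Set.Ioo 0 (1 / √A)) :
    Tendsto (effPot A om c) l atTop := by
  simp only [funext (effPot_eq_div A om c)]
  refine tendsto_div_atTop_of_tendsto_nhdsGT_zero (C := c + om ^ 2 * r₀ ^ 4) (by positivity)
    ((Continuous.tendsto (by fun_prop) r₀).mono_left hl) (tendsto_nhdsWithin_iff.2 ⟨?_, ?_⟩)
  · have h := ((Continuous.tendsto (by fun_prop) r₀).mono_left hl :
      Tendsto (fun r => 2 * (1 - A * r ^ 2) * r ^ 2) l _)
    rwa [mul_assoc, hr₀, mul_zero] at h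
  · filter_upwards [hmem] with r hr
    have := one_sub_mul_sq_pos hA hr
    have := hr.1
    show 0 < 2 * (1 - A * r ^ 2) * r ^ 2
    positivity

theorem tendsto_effPot_nhdsGT_zero (hA : 0 < A) (hc : 0 < c) :
    Tendsto (effPot A om c) (𝓝[>] 0) atTop :=
  tendsto_effPot_atTop hA hc nhdsWithin_le_nhds (by simp) (Ioo_mem_nhdsGT (by positivity))

theorem tendsto_effPot_nhdsLT (hA : 0 < A) (hc : 0 < c) :
    Tendsto (effPot A om c) (𝓝[<] (1 / √A)) atTop :=
  tendsto_effPot_atTop hA hc nhdsWithin_le_nhds (by rw [mul_sq_one_div_sqrt hA]; ring)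
    (Ioo_mem_nhdsLT (by positivity))

theorem criticalSq_pos (hom : om ≠ 0) (hc : 0 < c) : 0 < criticalSq A om c := by
  have : 0 < om ^ 2 * c := by positivity
  have : A * c < √(A ^ 2 * c ^ 2 + om ^ 2 * c) :=
    Real.lt_sqrt_of_sq_lt (by linarith [mul_pow A c 2])
  exact div_pos (by linarith) (by positivity)

theorem criticalSq_lt_one_div (hA : 0 < A) (hom : om ≠ 0) (hc : 0 ≤ c) :
    criticalSq A om c < 1 / A := by
  set s := √(A ^ 2 * c ^ 2 + om ^ 2 * c)
  have hs : s ^ 2 = A ^ 2 * c ^ 2 + om ^ 2 * c := Real.sq_sqrt (by positivity)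
  have hom2 : 0 < om ^ 2 := by positivity
  have hsA : A * s < om ^ 2 + A ^ 2 * c := by
    refine lt_of_pow_lt_pow_left₀ 2 (by positivity) ?_
    nlinarith [mul_nonneg (mul_nonneg hom2.le (sq_nonneg A)) hc, mul_pos hom2 hom2]
  rw [criticalSq, div_lt_div_iff₀ hom2 hA]
  linarith

theorem minValue_mul_criticalSq (hom : om ≠ 0) (hc : 0 ≤ c) :
    minValue A om c * criticalSq A om c = c := by
  rw [minValue, criticalSq]
  set s := √(A ^ 2 * c ^ 2 + om ^ 2 * c)
  have hs : s ^ 2 = A ^ 2 * c ^ 2 + om ^ 2 * c := Real.sq_sqrt (by positivity)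
  field_simp
  linear_combination hs

theorem minValue_eq_sq_mul_criticalSq_add (hom : om ≠ 0) :
    minValue A om c = om ^ 2 * criticalSq A om c + 2 * A * c := by
  rw [criticalSq, minValue]
  field_simp
  ring

theorem sqrt_criticalSq_mem_Ioo (hA : 0 < A) (hom : om ≠ 0) (hc : 0 < c) :
    √(criticalSq A om c) ∈ Set.Ioo 0 (1 / √A) := by
  refine ⟨Real.sqrt_pos.2 (criticalSq_pos hom hc), ?_⟩
  rw [one_div, ← Real.sqrt_inv, ← one_div]
  exact Real.sqrt_lt_sqrt (criticalSq_pos hom hc).le (criticalSq_lt_one_div hA hom hc.le)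

theorem effPot_eq_minValue_add (hA : 0 < A) (hom : om ≠ 0) (hc : 0 ≤ c) {r : ℝ}
    (hr : r ∈ Set.Ioo 0 (1 / √A)) :
    effPot A om c r = minValue A om c + (om ^ 2 + 2 * A * minValue A om c) *
      (r ^ 2 - criticalSq A om c) ^ 2 / (2 * (1 - A * r ^ 2) * r ^ 2) :=
  effPot_eq_add_sq (minValue_eq_sq_mul_criticalSq_add hom) (minValue_mul_criticalSq hom hc)
    hr.1.ne' (one_sub_mul_sq_pos hA hr).ne'

theorem effPot_sqrt_criticalSq (hA : 0 < A) (hom : om ≠ 0) (hc : 0 < c) :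
    effPot A om c √(criticalSq A om c) = minValue A om c := by
  rw [effPot_eq_minValue_add hA hom hc.le (sqrt_criticalSq_mem_Ioo hA hom hc),
    Real.sq_sqrt (criticalSq_pos hom hc).le]
  simp

theorem minValue_le_effPot (hA : 0 < A) (hom : om ≠ 0) (hc : 0 ≤ c) {r : ℝ}
    (hr : r ∈ Set.Ioo 0 (1 / √A)) : minValue A om c ≤ effPot A om c r := by
  have := one_sub_mul_sq_pos hA hr
  rw [effPot_eq_minValue_add hA hom hc hr, minValue]
  exact le_add_of_nonneg_right (by positivity)

theorem eq_sqrt_criticalSq_of_effPot_eq (hA : 0 < A) (hom : om ≠ 0) (hc : 0 ≤ c) {r : ℝ}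
    (hr : r ∈ Set.Ioo 0 (1 / √A)) (h : effPot A om c r = minValue A om c) :
    r = √(criticalSq A om c) := by
  have hD : 2 * (1 - A * r ^ 2) * r ^ 2 ≠ 0 := by
    have := one_sub_mul_sq_pos hA hr
    have := hr.1
    positivity
  have hK : om ^ 2 + 2 * A * minValue A om c ≠ 0 := by rw [minValue]; positivity
  rw [effPot_eq_minValue_add hA hom hc hr, add_eq_left, div_eq_zero_iff, or_iff_left hD,
    mul_eq_zero, or_iff_right hK, sq_eq_zero_iff, sub_eq_zero] at h
  rw [← h, Real.sqrt_sq hr.1.le]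

end

theorem stmt_17 (lam om c : ℝ) (hlam : lam < 0) (hom : 0 < om) (hc : 0 < c)
    (rc : ℝ) (hrc : rc = 1 / Real.sqrt |lam|)
    (Ueff : ℝ → ℝ)
    (hUeff : ∀ r, Ueff r = c / (2 * (1 - |lam| * r ^ 2) * r ^ 2)
        + om ^ 2 * r ^ 2 / (2 * (1 - |lam| * r ^ 2)))
    (rmin : ℝ)
    (hrmin : rmin = Real.sqrt ((-|lam| * c + Real.sqrt (lam ^ 2 * c ^ 2 + om ^ 2 * c)) / om ^ 2)) :
    rmin ∈ Set.Ioo (0 : ℝ) rc ∧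
    Ueff rmin = |lam| * c + Real.sqrt (lam ^ 2 * c ^ 2 + om ^ 2 * c) ∧
    (∀ r ∈ Set.Ioo (0 : ℝ) rc, Ueff rmin ≤ Ueff r) ∧
    (∀ r ∈ Set.Ioo (0 : ℝ) rc, Ueff r = Ueff rmin → r = rmin) ∧
    Tendsto Ueff (𝓝[>] (0 : ℝ)) atTop ∧
    Tendsto Ueff (𝓝[<] rc) atTop := by
  have hA : 0 < |lam| := abs_pos.2 hlam.ne
  have hU : Ueff = effPot |lam| om c := funext hUeff
  rw [← sq_abs lam] at hrmin ⊢
  change rmin = √(criticalSq |lam| om c) at hrmin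
  change _ ∧ _ = minValue |lam| om c ∧ _
  subst hU hrmin hrc
  rw [effPot_sqrt_criticalSq hA hom.ne' hc]
  exact ⟨sqrt_criticalSq_mem_Ioo hA hom.ne' hc, rfl,
    fun r hr => minValue_le_effPot hA hom.ne' hc.le hr,
    fun r hr h => eq_sqrt_criticalSq_of_effPot_eq hA hom.ne' hc.le hr h,
    tendsto_effPot_nhdsGT_zero hA hc, tendsto_effPot_nhdsLT hA hc⟩
end

section
/- For λ > 0, ω > 0, ℏ > 0 and N ≥ 1, the sequence E_n = −ℏ²λ(n + N/2)² + ℏ(n + N/2)√(ℏ²λ²(n + N/2)² + ω²) is strictly increasing in n ∈ ℕ and converges to ω²/(2λ) as n → ∞. -/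
/-! Rationalizing, `-λt² + t√(λ²t² + c) = c / (√(λ² + c/t²) + λ)` for `t > 0`. With `c = ω²` and
`t = ℏ(n + N/2)`, the denominator decreases strictly in `n` and tends to `2λ`. -/

open Filter Topology Set

section LevelFunction

variable {lam c t : ℝ}

noncomputable def levelFn (lam c t : ℝ) : ℝ :=
  -lam * t ^ 2 + t * √(lam ^ 2 * t ^ 2 + c)

lemma levelFn_eq_div (hlam : 0 < lam) (hc : 0 ≤ c) (ht : 0 < t) :
    levelFn lam c t = c / (√(lam ^ 2 + c / t ^ 2) + lam) := by
  set s := √(lam ^ 2 + c / t ^ 2)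
  have hs_sq : s ^ 2 = lam ^ 2 + c / t ^ 2 := Real.sq_sqrt (by positivity)
  have hsqrt : √(lam ^ 2 * t ^ 2 + c) = t * s := by
    rw [show lam ^ 2 * t ^ 2 + c = t ^ 2 * (lam ^ 2 + c / t ^ 2) by field_simp,
      Real.sqrt_mul (sq_nonneg t), Real.sqrt_sq ht.le]
  have hden : 0 < s + lam := by positivity
  rw [levelFn, hsqrt, eq_div_iff hden.ne']
  have : t ^ 2 * s ^ 2 = t ^ 2 * lam ^ 2 + c := by
    rw [hs_sq]
    field_simp
  linear_combination this

lemma strictMonoOn_levelFn (hlam : 0 < lam) (hc : 0 < c) :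
    StrictMonoOn (levelFn lam c) (Ioi 0) := by
  intro a (ha : 0 < a) b (hb : 0 < b) hab
  rw [levelFn_eq_div hlam hc.le ha, levelFn_eq_div hlam hc.le hb]
  have hsq : c / b ^ 2 < c / a ^ 2 := div_lt_div_of_pos_left hc (by positivity) (by gcongr)
  have hsqrt : √(lam ^ 2 + c / b ^ 2) < √(lam ^ 2 + c / a ^ 2) :=
    Real.sqrt_lt_sqrt (by positivity) (by linarith)
  exact div_lt_div_of_pos_left hc (by positivity) (by linarith)

lemma tendsto_levelFn_atTop (hlam : 0 < lam) (hc : 0 ≤ c) :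
    Tendsto (levelFn lam c) atTop (𝓝 (c / (2 * lam))) := by
  have hquot : Tendsto (fun t : ℝ => c / t ^ 2) atTop (𝓝 0) :=
    tendsto_const_nhds.div_atTop (tendsto_pow_atTop two_ne_zero)
  have hsqrt : Tendsto (fun t : ℝ => √(lam ^ 2 + c / t ^ 2)) atTop (𝓝 lam) := by
    have := ((tendsto_const_nhds (x := lam ^ 2)).add hquot).sqrt
    rwa [add_zero, Real.sqrt_sq hlam.le] at this
  have hlim : Tendsto (fun t : ℝ => c / (√(lam ^ 2 + c / t ^ 2) + lam)) atTop
      (𝓝 (c / (2 * lam))) := by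
    rw [two_mul]
    exact tendsto_const_nhds.div (hsqrt.add tendsto_const_nhds) (by positivity)
  refine hlim.congr' ?_
  filter_upwards [eventually_gt_atTop 0] with t ht
  exact (levelFn_eq_div hlam hc ht).symm

end LevelFunction

theorem stmt_19 (lam om hbar : ℝ) (hlam : 0 < lam) (hom : 0 < om) (hh : 0 < hbar)
    (N : ℕ) (hN : 1 ≤ N)
    (E : ℕ → ℝ)
    (hE : ∀ n : ℕ, E n = -hbar ^ 2 * lam * ((n : ℝ) + (N : ℝ) / 2) ^ 2
        + hbar * ((n : ℝ) + (N : ℝ) / 2)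
          * Real.sqrt (hbar ^ 2 * lam ^ 2 * ((n : ℝ) + (N : ℝ) / 2) ^ 2 + om ^ 2)) :
    StrictMono E ∧ Tendsto E atTop (𝓝 (om ^ 2 / (2 * lam))) := by
  set t : ℕ → ℝ := fun n => hbar * ((n : ℝ) + (N : ℝ) / 2)
  have hN_pos : (0 : ℝ) < N := by exact_mod_cast hN
  have ht_pos (n : ℕ) : 0 < t n := by positivity
  have ht_mono : StrictMono t := fun a b hab => by
    have : (a : ℝ) < b := by exact_mod_cast hab
    simp only [t]
    gcongr
  have ht_tendsto : Tendsto t atTop atTop :=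
    (tendsto_atTop_add_const_right _ _ tendsto_natCast_atTop_atTop).const_mul_atTop hh
  have hE_eq : E = levelFn lam (om ^ 2) ∘ t := by
    ext n
    rw [hE n, Function.comp_apply, levelFn]
    simp only [t]
    ring_nf
  rw [hE_eq]
  exact ⟨fun a b hab =>
      strictMonoOn_levelFn hlam (by positivity) (ht_pos a) (ht_pos b) (ht_mono hab),
    (tendsto_levelFn_atTop hlam (sq_nonneg om)).comp ht_tendsto⟩
end
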